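/- Let F be a real d×m matrix with orthonormal columns (FᵀF = I_m), and let c₀, x, y ∈ ℝ^d. Define f(s) := max(‖Fs+c₀−x‖, ‖Fs+c₀−y‖) for s ∈ ℝ^m, and set s_x := Fᵀ(x−c₀), s_y := Fᵀ(y−c₀), r_x(x) := ‖F s_x + c₀ − x‖, r_x(y) := ‖F s_x + c₀ − y‖, r_y(x) := ‖F s_y + c₀ − x‖, r_y(y) := ‖F s_y + c₀ − y‖. Then: (i) if r_x(x) ≥ r_x(y), the infimum of f over ℝ^m equals r_x(x) and is attained at s_x; (ii) if r_y(y) ≥ r_y(x), the infimum of f equals r_y(y) and is attained at s_y; (iii) if r_x(x) < r_x(y) and r_y(y) < r_y(x), then the infimum of f over ℝ^m equals the infimum of ‖Fs+c₀−x‖ over the set {s ∈ ℝ^m : ‖Fs+c₀−x‖ = ‖Fs+c₀−y‖}. -/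

import Mathlib

/-!
Each of `s ↦ ‖Fs + c₀ − x‖` and `s ↦ ‖Fs + c₀ − y‖` is convex and, since `FFᵀ` is the
orthogonal projection onto the range of `F`, minimized at `s_x` resp. `s_y`. In cases (i) and
(ii) the minimizer of one distance already dominates the other, so it minimizes the maximum.
Otherwise, given any `s` with, say, `‖Fs + c₀ − x‖ ≥ ‖Fs + c₀ − y‖`, the intermediate value
theorem on the segment `[s_x, s]` yields a point of the bisector
`‖Fs + c₀ − x‖ = ‖Fs + c₀ − y‖`, and by convexity its distance to `x` is at most
`max(r_x(x), ‖Fs + c₀ − x‖) = f(s)`.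
-/

noncomputable section

open Matrix

/-- View a plain vector `Fin n → ℝ` as a point of Euclidean space. -/
def toE {n : ℕ} (v : Fin n → ℝ) : EuclideanSpace ℝ (Fin n) :=
  (WithLp.equiv 2 (Fin n → ℝ)).symm v

/-- View a point of Euclidean space as a plain vector `Fin n → ℝ`. -/
def ofE {n : ℕ} (v : EuclideanSpace ℝ (Fin n)) : Fin n → ℝ :=
  (WithLp.equiv 2 (Fin n → ℝ)) v

open Set

theorem isLeast_range_max_of_forall_le {α β : Type*} [LinearOrder β] {φ ψ : α → β} {a : α}
    (hmin : ∀ s, φ a ≤ φ s) (hle : ψ a ≤ φ a) :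
    IsLeast (range fun s => max (φ s) (ψ s)) (φ a) :=
  ⟨⟨a, max_eq_left hle⟩, by rintro _ ⟨s, rfl⟩; exact (hmin s).trans (le_max_left _ _)⟩

section ConvexMax

variable {E : Type*} [AddCommGroup E] [Module ℝ E] [TopologicalSpace E]
  [IsTopologicalAddGroup E] [ContinuousSMul ℝ E] {φ ψ : E → ℝ}

theorem ConvexOn.exists_eq_and_le_of_le (hφ : ConvexOn ℝ univ φ) (hφc : Continuous φ)
    (hψc : Continuous ψ) {a s : E} (has : φ a ≤ φ s) (ha : φ a ≤ ψ a) (hs : ψ s ≤ φ s) :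
    ∃ p, φ p = ψ p ∧ φ p ≤ φ s := by
  obtain ⟨p, hp, hφψ⟩ := (convex_segment a s).isPreconnected.intermediate_value₂
    (left_mem_segment ℝ a s) (right_mem_segment ℝ a s) hφc.continuousOn hψc.continuousOn
    ha hs
  exact ⟨p, hφψ, (hφ.le_max_of_mem_segment trivial trivial hp).trans (max_le has le_rfl)⟩

theorem sInf_range_max_eq_sInf_image_eq (hφ : ConvexOn ℝ univ φ) (hψ : ConvexOn ℝ univ ψ)
    (hφc : Continuous φ) (hψc : Continuous ψ) {a b : E} (ha : ∀ s, φ a ≤ φ s)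
    (hb : ∀ s, ψ b ≤ ψ s) (hab : φ a ≤ ψ a) (hba : ψ b ≤ φ b) :
    sInf (range fun s => max (φ s) (ψ s)) = sInf (φ '' {s | φ s = ψ s}) := by
  refine csInf_eq_csInf_of_forall_exists_le ?_ ?_
  · rintro _ ⟨s, rfl⟩
    rcases le_total (ψ s) (φ s) with hs | hs
    · obtain ⟨p, hp, hps⟩ := hφ.exists_eq_and_le_of_le hφc hψc (ha s) hab hs
      exact ⟨φ p, ⟨p, hp, rfl⟩, hps.trans (le_max_left _ _)⟩
    · obtain ⟨p, hp, hps⟩ := hψ.exists_eq_and_le_of_le hψc hφc (hb s) hba hs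
      exact ⟨φ p, ⟨p, hp.symm, rfl⟩, hp ▸ hps.trans (le_max_right _ _)⟩
  · rintro _ ⟨p, hp, rfl⟩
    exact ⟨_, ⟨p, rfl⟩, max_le le_rfl hp.ge⟩

end ConvexMax

section Projection

variable {E V : Type*} [NormedAddCommGroup E] [InnerProductSpace ℝ E] [FiniteDimensional ℝ E]
  [NormedAddCommGroup V] [InnerProductSpace ℝ V] [FiniteDimensional ℝ V]

theorem LinearMap.norm_apply_adjoint_sub_le (T : E →ₗ[ℝ] V) (hT : ∀ u, T.adjoint (T u) = u)
    (w : V) (s : E) : ‖T (T.adjoint w) - w‖ ≤ ‖T s - w‖ := by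
  have horth : inner ℝ (T (s - T.adjoint w)) (T (T.adjoint w) - w) = 0 := by
    rw [← LinearMap.adjoint_inner_right, map_sub, hT, sub_self, inner_zero_right]
  have hpyth := norm_add_sq_eq_norm_sq_add_norm_sq_real horth
  rw [map_sub, sub_add_sub_cancel] at hpyth
  rw [mul_self_le_mul_self_iff (norm_nonneg _) (norm_nonneg _), hpyth]
  exact le_add_of_nonneg_left (mul_self_nonneg _)

end Projection

theorem LinearMap.convexOn_norm_apply_add_sub {E V : Type*} [AddCommGroup E] [Module ℝ E]
    [SeminormedAddCommGroup V] [NormedSpace ℝ V] (T : E →ₗ[ℝ] V) (c z : V) :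
    ConvexOn ℝ univ fun s => ‖T s + c - z‖ := by
  refine ((convexOn_norm convex_univ).comp_affineMap
    (T.toAffineMap + AffineMap.const ℝ E (c - z))).congr fun s _ => ?_
  simp [add_sub_assoc]

/-- Solution of the relaxed optimization problem: for a matrix `F` with orthonormal
columns and `f(s) = max(‖Fs + c₀ − x‖, ‖Fs + c₀ − y‖)`, with candidates
`s_x = Fᵀ(x − c₀)` and `s_y = Fᵀ(y − c₀)`:
(i) if `r_x(x) ≥ r_x(y)` the infimum of `f` is `r_x(x)`, attained at `s_x`;
(ii) if `r_y(y) ≥ r_y(x)` the infimum of `f` is `r_y(y)`, attained at `s_y`;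
(iii) otherwise the infimum of `f` equals the infimum of `‖Fs + c₀ − x‖` over the
set where `‖Fs + c₀ − x‖ = ‖Fs + c₀ − y‖`. -/
theorem relaxed_optimization_solution (d m : ℕ) (F : Matrix (Fin d) (Fin m) ℝ)
    (hF : Fᵀ * F = 1) (c₀ x y : EuclideanSpace ℝ (Fin d)) :
    let g : EuclideanSpace ℝ (Fin m) → EuclideanSpace ℝ (Fin d) :=
      fun s => toE (F.mulVec (ofE s)) + c₀
    let f : EuclideanSpace ℝ (Fin m) → ℝ := fun s => max ‖g s - x‖ ‖g s - y‖
    let sx : EuclideanSpace ℝ (Fin m) := toE (Fᵀ.mulVec (ofE (x - c₀)))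
    let sy : EuclideanSpace ℝ (Fin m) := toE (Fᵀ.mulVec (ofE (y - c₀)))
    let rxx : ℝ := ‖g sx - x‖
    let rxy : ℝ := ‖g sx - y‖
    let ryx : ℝ := ‖g sy - x‖
    let ryy : ℝ := ‖g sy - y‖
    (rxx ≥ rxy → IsGLB (Set.range f) rxx ∧ f sx = rxx) ∧
      (ryy ≥ ryx → IsGLB (Set.range f) ryy ∧ f sy = ryy) ∧
      (rxx < rxy → ryy < ryx →
        sInf (Set.range f) =
          sInf ((fun s => ‖g s - x‖) '' {s | ‖g s - x‖ = ‖g s - y‖})) := by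
  intro g f sx sy rxx rxy ryx ryy
  set T := toEuclideanLin F
  have hTadj : ∀ v, toE (Fᵀ.mulVec (ofE v)) = T.adjoint v := fun v => by
    rw [← toEuclideanLin_conjTranspose_eq_adjoint, conjTranspose_eq_transpose_of_trivial]; rfl
  have hT : ∀ u, T.adjoint (T u) = u := fun u => by
    rw [← hTadj]
    change toE (Fᵀ *ᵥ (F *ᵥ ofE u)) = u
    rw [mulVec_mulVec, hF, one_mulVec]; rfl
  have hmin : ∀ z s, ‖g (toE (Fᵀ.mulVec (ofE (z - c₀)))) - z‖ ≤ ‖g s - z‖ := fun z s => by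
    have h := T.norm_apply_adjoint_sub_le hT (z - c₀) s
    rw [sub_sub_eq_add_sub, sub_sub_eq_add_sub, ← hTadj] at h
    exact h
  have hconv : ∀ z, ConvexOn ℝ univ fun s => ‖g s - z‖ := T.convexOn_norm_apply_add_sub c₀
  have hcont : ∀ z, Continuous fun s => ‖g s - z‖ := fun z => by
    have := T.continuous_of_finiteDimensional
    change Continuous fun s => ‖T s + c₀ - z‖
    fun_prop
  refine ⟨fun h => ⟨?_, max_eq_left h⟩, fun h => ⟨?_, max_eq_right h⟩,
    fun hx hy => sInf_range_max_eq_sInf_image_eq (hconv x) (hconv y) (hcont x) (hcont y)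
      (hmin x) (hmin y) hx.le hy.le⟩
  · exact (isLeast_range_max_of_forall_le (ψ := fun s => ‖g s - y‖) (hmin x) h).isGLB
  · rw [show f = fun s => max ‖g s - y‖ ‖g s - x‖ from funext fun s => max_comm _ _]
    exact (isLeast_range_max_of_forall_le (ψ := fun s => ‖g s - x‖) (hmin y) h).isGLB
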